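/- arXiv:1901.08356 — 2 statements merged into one kernel-verified Lean document; each statement's English description precedes it below -/
import Mathlib

section
/- Let (Ω, F, P) be a probability space, ℍ = (H_t)_{t≥0} a filtration of sub-σ-algebras of F, and Ψ : Ω × [0,∞) → ℝ a jointly measurable process such that E[∫_0^t |Ψ_s| ds] < ∞ for every t ≥ 0. Suppose Ψ̂ : Ω × [0,∞) → ℝ is a jointly measurable process such that Ψ̂_s is H_s-measurable for each s and Ψ̂_s = E[Ψ_s | H_s] almost surely for Lebesgue-a.e. s ≥ 0. Then for all 0 ≤ s ≤ t one has, almost surely, E[ E[∫_0^t Ψ_u du | H_t] − ∫_0^t Ψ̂_u du | H_s ] = E[∫_0^s Ψ_u du | H_s] − ∫_0^s Ψ̂_u du; that is, the process t ↦ E[∫_0^t Ψ_u du | H_t] − ∫_0^t Ψ̂_u du is an ℍ-martingale. -/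
/-!
Write `C_t = ∫₀ᵗ Ψ` and `B_t = ∫₀ᵗ Ψ̂`. By the tower property, `E[E[C_t | H_t] - B_t | H_s]` equals
`E[C_s | H_s] + E[C_t - C_s | H_s] - E[B_s | H_s] - E[B_t - B_s | H_s]`.
Fubini moves the conditional expectation through the time integral on `H_s`-sets, and for `u ≥ s`
the tower property gives `E[Ψ̂_u | H_s] = E[Ψ_u | H_s]`, so the increments of `C` and `B` have the
same conditional expectation. Finally `B_s = E[B_s | H_s]` a.s., because every `Ψ̂_u` with `u ≤ s`
is `H_s`-measurable; integrability of `Ψ̂` on `[0, t] × Ω` comes from `E|E[Ψ_u | H_u]| ≤ E|Ψ_u|`.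
-/

open MeasureTheory Set Filter Function

section ProductIntegrability

variable {ι Ω : Type*} [MeasurableSpace ι] [MeasurableSpace Ω] {μ : Measure Ω} {ν : Measure ι}

lemma integrable_uncurry_of_lintegral_lt_top [SFinite μ] [SFinite ν] {Φ : ι → Ω → ℝ}
    (hΦ : Measurable (uncurry Φ))
    (h : ∫⁻ ω, ∫⁻ u, ENNReal.ofReal |Φ u ω| ∂ν ∂μ < ⊤) :
    Integrable (uncurry Φ) (ν.prod μ) := by
  have hswap : Integrable (fun p : Ω × ι => Φ p.2 p.1) (μ.prod ν) := by
    have hmeas : Measurable fun p : Ω × ι => Φ p.2 p.1 := hΦ.comp measurable_swap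
    refine ⟨hmeas.aestronglyMeasurable, ?_⟩
    rw [hasFiniteIntegral_iff_norm, lintegral_prod _ hmeas.norm.ennreal_ofReal.aemeasurable]
    simpa only [Real.norm_eq_abs] using h
  exact hswap.swap

lemma integrable_uncurry_of_ae_eq_condExp [SFinite μ] [SFinite ν] {Φ Φ' : ι → Ω → ℝ}
    {𝓖 : ι → MeasurableSpace Ω} (hΦ : Integrable (uncurry Φ) (ν.prod μ))
    (hΦ' : AEStronglyMeasurable (uncurry Φ') (ν.prod μ))
    (h : ∀ᵐ u ∂ν, Φ' u =ᵐ[μ] μ[Φ u | 𝓖 u]) :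
    Integrable (uncurry Φ') (ν.prod μ) := by
  rw [integrable_prod_iff hΦ']
  constructor
  · filter_upwards [h] with u hu
    exact integrable_condExp.congr hu.symm
  · refine hΦ.integral_norm_prod_left.mono' hΦ'.norm.integral_prod_right' ?_
    filter_upwards [h] with u hu
    calc ‖∫ ω, ‖Φ' u ω‖ ∂μ‖ = ∫ ω, |μ[Φ u | 𝓖 u] ω| ∂μ := by
          rw [Real.norm_of_nonneg (integral_nonneg fun _ => norm_nonneg _)]
          exact integral_congr_ae (hu.mono fun ω hω => by simp only [hω, Real.norm_eq_abs])
      _ ≤ ∫ ω, |Φ u ω| ∂μ := integral_abs_condExp_le _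
      _ = ∫ ω, ‖uncurry Φ (u, ω)‖ ∂μ := by simp only [uncurry, Real.norm_eq_abs]

end ProductIntegrability

section CondExp

variable {ι Ω : Type*} [MeasurableSpace ι] {m m0 : MeasurableSpace Ω} {μ : Measure Ω}
  {ν : Measure ι}

lemma integral_mul_condExp_of_stronglyMeasurable (hm : m ≤ m0) [SigmaFinite (μ.trim hm)]
    {f g : Ω → ℝ} (hf : StronglyMeasurable[m] f) (hfg : Integrable (f * g) μ)
    (hg : Integrable g μ) :
    ∫ ω, f ω * g ω ∂μ = ∫ ω, f ω * μ[g | m] ω ∂μ := by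
  rw [← integral_condExp hm (f := fun ω => f ω * g ω)]
  exact integral_congr_ae (condExp_mul_of_stronglyMeasurable_left hf hfg hg)

lemma integral_condExp_mul_eq_integral_mul_condExp (hm : m ≤ m0) [IsFiniteMeasure μ]
    {f g : Ω → ℝ} {C : ℝ} (hf : Integrable f μ) (hg : AEStronglyMeasurable g μ)
    (hg_bdd : ∀ᵐ ω ∂μ, |g ω| ≤ C) :
    ∫ ω, μ[f | m] ω * g ω ∂μ = ∫ ω, f ω * μ[g | m] ω ∂μ := by
  have hg_int : Integrable g μ := .of_bound hg C (by simpa only [Real.norm_eq_abs] using hg_bdd)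
  have hcg_bdd : ∀ᵐ ω ∂μ, ‖μ[g | m] ω‖ ≤ C := by
    simpa only [Real.norm_eq_abs] using ae_bdd_abs_condExp_of_ae_bdd_abs hg_bdd
  calc ∫ ω, μ[f | m] ω * g ω ∂μ = ∫ ω, μ[f | m] ω * μ[g | m] ω ∂μ :=
        integral_mul_condExp_of_stronglyMeasurable hm stronglyMeasurable_condExp
          (integrable_condExp.mul_bdd hg (by simpa only [Real.norm_eq_abs] using hg_bdd)) hg_int
    _ = ∫ ω, μ[g | m] ω * f ω ∂μ := by
        simp_rw [mul_comm (μ[f | m] _)]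
        exact (integral_mul_condExp_of_stronglyMeasurable hm stronglyMeasurable_condExp
          (hf.bdd_mul integrable_condExp.aestronglyMeasurable hcg_bdd) hf).symm
    _ = ∫ ω, f ω * μ[g | m] ω ∂μ := by simp_rw [mul_comm (μ[g | m] _)]

lemma integral_integral_mul_swap_of_bdd [SFinite μ] [SFinite ν] {Φ : ι → Ω → ℝ}
    (hΦ : Integrable (uncurry Φ) (ν.prod μ)) {g : Ω → ℝ} (hg : AEStronglyMeasurable g μ)
    {C : ℝ} (hg_bdd : ∀ᵐ ω ∂μ, |g ω| ≤ C) :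
    ∫ ω, (∫ u, Φ u ω ∂ν) * g ω ∂μ = ∫ u, ∫ ω, Φ u ω * g ω ∂μ ∂ν := by
  have hint : Integrable (uncurry fun u ω => Φ u ω * g ω) (ν.prod μ) :=
    hΦ.mul_bdd (hg.comp_snd (μ := ν))
      (Measure.quasiMeasurePreserving_snd.ae (by simpa only [Real.norm_eq_abs] using hg_bdd))
  simp_rw [← integral_mul_const]
  exact (integral_integral_swap hint).symm

lemma setIntegral_eq_integral_mul_indicator_one {A : Set Ω} (hA : MeasurableSet A)
    (f : Ω → ℝ) : ∫ ω in A, f ω ∂μ = ∫ ω, f ω * A.indicator 1 ω ∂μ := by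
  rw [← integral_indicator hA]
  congr 1 with ω
  by_cases hω : ω ∈ A <;> simp [hω]

/-- `uncurry Φ` need not be measurable for the product σ-algebra built on `m`, so the time integral
is only shown to be `m`-measurable up to a null set, by duality against `μ[1_A | m]`. -/
lemma condExp_integral_of_ae_stronglyMeasurable (hm : m ≤ m0) [IsFiniteMeasure μ] [SFinite ν]
    {Φ : ι → Ω → ℝ} (hΦ : Integrable (uncurry Φ) (ν.prod μ))
    (hΦm : ∀ᵐ u ∂ν, StronglyMeasurable[m] (Φ u)) :
    μ[fun ω => ∫ u, Φ u ω ∂ν | m] =ᵐ[μ] fun ω => ∫ u, Φ u ω ∂ν := by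
  have hint : Integrable (fun ω => ∫ u, Φ u ω ∂ν) μ := hΦ.integral_prod_right
  refine ae_eq_of_forall_setIntegral_eq_of_sigmaFinite
    (fun _ _ _ => integrable_condExp.integrableOn) (fun _ _ _ => hint.integrableOn)
    fun A hA _ => ?_
  have h1 : AEStronglyMeasurable (A.indicator (1 : Ω → ℝ)) μ :=
    (stronglyMeasurable_one.indicator hA).aestronglyMeasurable
  have h1_bdd : ∀ᵐ ω ∂μ, |A.indicator (1 : Ω → ℝ) ω| ≤ 1 :=
    .of_forall fun ω => by by_cases hω : ω ∈ A <;> simp [hω]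
  have h1m_bdd : ∀ᵐ ω ∂μ, |μ[A.indicator (1 : Ω → ℝ) | m] ω| ≤ 1 :=
    ae_bdd_abs_condExp_of_ae_bdd_abs h1_bdd
  -- Each slice `Φ u` is `m`-measurable, so it cannot tell `1_A` from `μ[1_A | m]`.
  have hslice : ∀ᵐ u ∂ν,
      ∫ ω, Φ u ω * μ[A.indicator 1 | m] ω ∂μ = ∫ ω, Φ u ω * A.indicator 1 ω ∂μ := by
    filter_upwards [hΦm, hΦ.prod_right_ae] with u hu hu_int
    exact (integral_mul_condExp_of_stronglyMeasurable hm hu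
      (hu_int.mul_bdd h1 (by simpa only [Real.norm_eq_abs] using h1_bdd))
      ((integrable_const 1).indicator hA)).symm
  rw [setIntegral_eq_integral_mul_indicator_one hA, setIntegral_eq_integral_mul_indicator_one hA,
    integral_condExp_mul_eq_integral_mul_condExp hm hint h1 h1_bdd,
    integral_integral_mul_swap_of_bdd hΦ integrable_condExp.aestronglyMeasurable h1m_bdd,
    integral_integral_mul_swap_of_bdd hΦ h1 h1_bdd]
  exact integral_congr_ae hslice

lemma condExp_integral_congr_of_ae_condExp_eq (hm : m ≤ m0) [IsFiniteMeasure μ] [SFinite ν]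
    {Φ Φ' : ι → Ω → ℝ} (hΦ : Integrable (uncurry Φ) (ν.prod μ))
    (hΦ' : Integrable (uncurry Φ') (ν.prod μ))
    (h : ∀ᵐ u ∂ν, μ[Φ u | m] =ᵐ[μ] μ[Φ' u | m]) :
    μ[fun ω => ∫ u, Φ u ω ∂ν | m] =ᵐ[μ] μ[fun ω => ∫ u, Φ' u ω ∂ν | m] := by
  have hset : ∀ {F : ι → Ω → ℝ}, Integrable (uncurry F) (ν.prod μ) → ∀ A, MeasurableSet[m] A →
      ∫ ω in A, ∫ u, F u ω ∂ν ∂μ = ∫ u, ∫ ω in A, μ[F u | m] ω ∂μ ∂ν := by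
    intro F hF A hA
    rw [← integral_integral_swap
      (hF.mono_measure (Measure.prod_mono le_rfl Measure.restrict_le_self))]
    refine integral_congr_ae ?_
    filter_upwards [hF.prod_right_ae] with u hu
    exact (setIntegral_condExp hm hu hA).symm
  have hint : Integrable (fun ω => ∫ u, Φ u ω ∂ν) μ := hΦ.integral_prod_right
  have hint' : Integrable (fun ω => ∫ u, Φ' u ω ∂ν) μ := hΦ'.integral_prod_right
  refine ae_eq_condExp_of_forall_setIntegral_eq hm hint'
    (fun _ _ _ => integrable_condExp.integrableOn) (fun A hA _ => ?_)
    stronglyMeasurable_condExp.aestronglyMeasurable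
  rw [setIntegral_condExp hm hint hA, hset hΦ A hA, hset hΦ' A hA]
  refine integral_congr_ae ?_
  filter_upwards [h] with u hu
  exact setIntegral_congr_ae (hm A hA) (hu.mono fun ω hω _ => hω)

lemma condExp_integral_Ioc_add [SFinite μ] {Φ : ℝ → Ω → ℝ} {a b c : ℝ} (hab : a ≤ b)
    (hbc : b ≤ c) (hΦ : Integrable (uncurry Φ) ((volume.restrict (Ioc a c)).prod μ)) :
    μ[fun ω => ∫ u in Ioc a c, Φ u ω | m] =ᵐ[μ]
      μ[fun ω => ∫ u in Ioc a b, Φ u ω | m] + μ[fun ω => ∫ u in Ioc b c, Φ u ω | m] := by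
  have hsub : ∀ {a' c'}, a ≤ a' → c' ≤ c →
      Integrable (fun ω => ∫ u in Ioc a' c', Φ u ω) μ := fun ha hc =>
    (hΦ.mono_measure (Measure.prod_mono (Measure.restrict_mono (Ioc_subset_Ioc ha hc) le_rfl)
      le_rfl)).integral_prod_right
  refine (condExp_congr_ae ?_).trans (condExp_add (hsub le_rfl hbc) (hsub hab le_rfl) m)
  filter_upwards [hΦ.prod_left_ae] with ω hω
  have hω' : IntegrableOn (fun u => Φ u ω) (Ioc a c) := hω
  rw [← Ioc_union_Ioc_eq_Ioc hab hbc,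
    setIntegral_union (Ioc_disjoint_Ioc_of_le le_rfl) measurableSet_Ioc
      (hω'.mono_set (Ioc_subset_Ioc le_rfl hbc)) (hω'.mono_set (Ioc_subset_Ioc hab le_rfl))]
  rfl

end CondExp

/-- If `Ψ` is a jointly measurable, integrable process and `Ψ̂ s` is a version of the
conditional expectation `E[Ψ s | H s]` for a.e. `s ≥ 0`, then the process
`t ↦ E[∫_0^t Ψ_u du | H t] − ∫_0^t Ψ̂_u du` is a martingale with respect to the
filtration `H`. -/
theorem condexp_integral_sub_integral_condexp_is_martingale
    {Ω : Type*} [inst : MeasurableSpace Ω] (μ : Measure Ω) [IsProbabilityMeasure μ]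
    (H : ℝ → MeasurableSpace Ω)
    (hH_mono : ∀ s t : ℝ, 0 ≤ s → s ≤ t → H s ≤ H t)
    (hH_le : ∀ t : ℝ, 0 ≤ t → H t ≤ inst)
    (Ψ Ψhat : ℝ → Ω → ℝ)
    (hΨ_meas : Measurable (Function.uncurry Ψ))
    (hΨhat_meas : Measurable (Function.uncurry Ψhat))
    (hΨ_int : ∀ t : ℝ, 0 ≤ t →
      ∫⁻ ω, (∫⁻ s in Set.Ioc (0:ℝ) t, ENNReal.ofReal |Ψ s ω|) ∂μ < ⊤)
    (hΨhat_adapted : ∀ s : ℝ, 0 ≤ s → StronglyMeasurable[H s] (Ψhat s))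
    (hΨhat_condexp : ∀ᵐ s ∂(volume.restrict (Set.Ici (0:ℝ))),
      Ψhat s =ᵐ[μ] μ[Ψ s | H s]) :
    ∀ s t : ℝ, 0 ≤ s → s ≤ t →
      μ[(fun ω => (μ[(fun ω' => ∫ u in Set.Ioc (0:ℝ) t, Ψ u ω') | H t]) ω
            - ∫ u in Set.Ioc (0:ℝ) t, Ψhat u ω) | H s]
        =ᵐ[μ]
      fun ω => (μ[(fun ω' => ∫ u in Set.Ioc (0:ℝ) s, Ψ u ω') | H s]) ω
            - ∫ u in Set.Ioc (0:ℝ) s, Ψhat u ω := by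
  intro s t hs hst
  have ht : 0 ≤ t := hs.trans hst
  have hΨ_prod : ∀ a b, 0 ≤ a → a ≤ b →
      Integrable (uncurry Ψ) ((volume.restrict (Ioc a b)).prod μ) := fun a b ha hab =>
    integrable_uncurry_of_lintegral_lt_top hΨ_meas <| (lintegral_mono fun _ =>
      lintegral_mono_set (Ioc_subset_Ioc ha le_rfl)).trans_lt (hΨ_int b (ha.trans hab))
  have hΨhat_prod : ∀ a b, 0 ≤ a → a ≤ b →
      Integrable (uncurry Ψhat) ((volume.restrict (Ioc a b)).prod μ) := fun a b ha hab =>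
    integrable_uncurry_of_ae_eq_condExp (hΨ_prod a b ha hab) hΨhat_meas.aestronglyMeasurable
      (ae_restrict_of_ae_restrict_of_subset (fun _ hu => ha.trans hu.1.le) hΨhat_condexp)
  have hΨhat_s : μ[fun ω => ∫ u in Ioc 0 s, Ψhat u ω | H s] =ᵐ[μ]
      fun ω => ∫ u in Ioc 0 s, Ψhat u ω := by
    refine condExp_integral_of_ae_stronglyMeasurable (hH_le s hs) (hΨhat_prod 0 s le_rfl hs) ?_
    filter_upwards [ae_restrict_mem measurableSet_Ioc] with u hu
    exact (hΨhat_adapted u hu.1.le).mono (hH_mono u s hu.1.le hu.2)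
  have hincrement : μ[fun ω => ∫ u in Ioc s t, Ψ u ω | H s] =ᵐ[μ]
      μ[fun ω => ∫ u in Ioc s t, Ψhat u ω | H s] := by
    refine condExp_integral_congr_of_ae_condExp_eq (hH_le s hs) (hΨ_prod s t hs hst)
      (hΨhat_prod s t hs hst) ?_
    filter_upwards [ae_restrict_mem measurableSet_Ioc, ae_restrict_of_ae_restrict_of_subset
      (fun _ hu => hs.trans hu.1.le) hΨhat_condexp] with u hu hu_hat
    exact ((condExp_congr_ae hu_hat).trans (condExp_condExp_of_le
      (hH_mono s u hs hu.1.le) (hH_le u (hs.trans hu.1.le)))).symm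
  filter_upwards [condExp_sub (f := μ[fun ω' => ∫ u in Ioc 0 t, Ψ u ω' | H t])
      (g := fun ω => ∫ u in Ioc 0 t, Ψhat u ω) integrable_condExp
      (hΨhat_prod 0 t le_rfl ht).integral_prod_right (H s),
    condExp_condExp_of_le (μ := μ) (f := fun ω => ∫ u in Ioc 0 t, Ψ u ω)
      (hH_mono s t hs hst) (hH_le t ht),
    condExp_integral_Ioc_add (m := H s) hs hst (hΨ_prod 0 t le_rfl ht),
    condExp_integral_Ioc_add (m := H s) hs hst (hΨhat_prod 0 t le_rfl ht),
    hΨhat_s, hincrement] with ω h_sub h_tower h_Ψ h_Ψhat h_Ψhat_s h_increment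
  simp only [Pi.sub_apply, Pi.add_apply] at h_sub h_Ψ h_Ψhat
  refine h_sub.trans ?_
  rw [h_tower, h_Ψ, h_Ψhat, h_Ψhat_s, h_increment]
  ring
end

section
/- In the setting of the one-dimensional optimal stopping problem v_⋆(x) := inf_τ E[ ∫_0^τ e^{−ρt} Ψ^x_t h'(Ψ^x_t) dt + 1_{{τ < ∞}} e^{−ρτ} Ψ^x_τ ], assume additionally ρ > max(β₂ + σ²/2, γβ₂ + (σ²/2)γ(γ − 1)). If 0 < x₁ ≤ x₂ and v_⋆(x₁) ≥ x₁, then v_⋆(x₂) ≥ x₂; equivalently, the stopping set { x > 0 : v_⋆(x) ≥ x } is an upward-closed subset of (0, ∞). -/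
open MeasureTheory ProbabilityTheory ENNReal

/-- `W` is a standard one-dimensional Brownian motion on `(Ω, F, P)`. -/
def IsStandardBM {Ω : Type*} [MeasurableSpace Ω] (μ : Measure Ω) (W : ℝ → Ω → ℝ) : Prop :=
  (∀ t : ℝ, Measurable (W t)) ∧
  (∀ᵐ ω ∂μ, W 0 ω = 0) ∧
  (∀ᵐ ω ∂μ, Continuous fun t => W t ω) ∧
  (∀ (n : ℕ) (t : ℕ → ℝ), Monotone t → (∀ i, 0 ≤ t i) →
    iIndepFun (m := fun _ : Fin n => (inferInstance : MeasurableSpace ℝ))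
      (fun i ω => W (t (i + 1)) ω - W (t i) ω) μ) ∧
  (∀ s t : ℝ, 0 ≤ s → s ≤ t →
    μ.map (fun ω => W t ω - W s ω) = gaussianReal 0 (Real.toNNReal (t - s)))

/-- The geometric Brownian motion `Ψ^x_t = x exp((β₂ − σ²/2)t + σ W_t)`. -/
noncomputable def gbm {Ω : Type*} (W : ℝ → Ω → ℝ) (β₂ σ x : ℝ) (t : ℝ) (ω : Ω) : ℝ :=
  x * Real.exp ((β₂ - σ ^ 2 / 2) * t + σ * W t ω)

/-- The natural filtration generated by the process `W`: `σ(W_s : 0 ≤ s ≤ t)`. -/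
def natFilt {Ω : Type*} (W : ℝ → Ω → ℝ) (t : ℝ) : MeasurableSpace Ω :=
  ⨆ s ∈ Set.Icc (0:ℝ) t, MeasurableSpace.comap (W s) (inferInstance : MeasurableSpace ℝ)

/-- `τ : Ω → [0,∞]` is a stopping time of the natural filtration of `W`. -/
def IsNatStoppingTime {Ω : Type*} (W : ℝ → Ω → ℝ) (τ : Ω → ℝ≥0∞) : Prop :=
  ∀ t : ℝ, 0 ≤ t → MeasurableSet[natFilt W t] {ω | τ ω ≤ ENNReal.ofReal t}

/-- The cost `E[∫_0^τ e^{−ρt} X_t h'(X_t) dt + 1_{τ<∞} e^{−ρτ} X_τ]` associated with the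
stopping time `τ` (the terminal payoff being `0` on `{τ = ∞}`). -/
noncomputable def stopCost {Ω : Type*} [MeasurableSpace Ω] (μ : Measure Ω) (ρ : ℝ)
    (h' : ℝ → ℝ) (X : ℝ → Ω → ℝ) (τ : Ω → ℝ≥0∞) : ℝ≥0∞ :=
  ∫⁻ ω,
    (∫⁻ t in {t : ℝ | 0 ≤ t ∧ ENNReal.ofReal t < τ ω},
        ENNReal.ofReal (Real.exp (-ρ * t) * X t ω * h' (X t ω)))
      + (if τ ω < ⊤ then
          ENNReal.ofReal (Real.exp (-ρ * (τ ω).toReal) * X (τ ω).toReal ω) else 0) ∂μ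

/-- The value `v(x) = inf_τ stopCost` of the optimal stopping problem, the infimum being
over all stopping times of the natural filtration of `W`. -/
noncomputable def stopValue {Ω : Type*} [MeasurableSpace Ω] (μ : Measure Ω) (ρ : ℝ)
    (h' : ℝ → ℝ) (W : ℝ → Ω → ℝ) (X : ℝ → Ω → ℝ) : ℝ≥0∞ :=
  ⨅ τ : {τ : Ω → ℝ≥0∞ // IsNatStoppingTime W τ}, stopCost μ ρ h' X τ.1


/-! Since `Ψ^{c x} = c Ψ^x`, any stopping time `τ` has cost for the start `c x` at least `c`
times its cost for the start `x` when `c ≥ 1`: the terminal payoff scales exactly, and the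
running cost `e^{−ρt} X h'(X)` at least scales, because `h'` is nondecreasing by convexity.
Hence `v_⋆(c x) ≥ c v_⋆(x) ≥ c x` whenever `v_⋆(x) ≥ x`. -/

theorem ConvexOn.monotone_of_hasDerivAt {f f' : ℝ → ℝ} (hf : ConvexOn ℝ Set.univ f)
    (hderiv : ∀ x, HasDerivAt f (f' x) x) : Monotone f' := by
  have hf' : deriv f = f' := funext fun x => (hderiv x).deriv
  rw [← monotoneOn_univ, ← hf']
  exact hf.monotoneOn_deriv fun x _ => (hderiv x).differentiableAt

theorem gbm_mul_left {Ω : Type*} (W : ℝ → Ω → ℝ) (β₂ σ c x t : ℝ) (ω : Ω) :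
    gbm W β₂ σ (c * x) t ω = c * gbm W β₂ σ x t ω := by
  simp only [gbm, mul_assoc]

section Scaling

variable {Ω : Type*} [MeasurableSpace Ω] (μ : Measure Ω) (ρ : ℝ) {h' : ℝ → ℝ}
  (hh' : Monotone h') {X : ℝ → Ω → ℝ} (hX : ∀ t ω, 0 ≤ X t ω) {c : ℝ} (hc : 1 ≤ c)
include hh' hX hc

theorem ofReal_mul_stopCost_le_stopCost_const_mul (τ : Ω → ℝ≥0∞) :
    ENNReal.ofReal c * stopCost μ ρ h' X τ ≤
      stopCost μ ρ h' (fun t ω => c * X t ω) τ := by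
  have hc0 : 0 ≤ c := zero_le_one.trans hc
  unfold stopCost
  rw [← lintegral_const_mul' _ _ ofReal_ne_top]
  refine lintegral_mono fun ω => ?_
  rw [mul_add, ← lintegral_const_mul' _ _ ofReal_ne_top]
  gcongr with t
  · rw [← ENNReal.ofReal_mul hc0]
    refine ENNReal.ofReal_le_ofReal ?_
    have hXc : h' (X t ω) ≤ h' (c * X t ω) := hh' (le_mul_of_one_le_left (hX t ω) hc)
    calc c * (Real.exp (-ρ * t) * X t ω * h' (X t ω))
        = Real.exp (-ρ * t) * (c * X t ω) * h' (X t ω) := by ring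
      _ ≤ Real.exp (-ρ * t) * (c * X t ω) * h' (c * X t ω) := by
          gcongr
          exact mul_nonneg (Real.exp_pos _).le (mul_nonneg hc0 (hX t ω))
  · split_ifs
    · rw [← ENNReal.ofReal_mul hc0, mul_left_comm]
    · rw [mul_zero]

theorem ofReal_mul_stopValue_le_stopValue_const_mul (W : ℝ → Ω → ℝ) :
    ENNReal.ofReal c * stopValue μ ρ h' W X ≤
      stopValue μ ρ h' W (fun t ω => c * X t ω) :=
  le_iInf fun τ => (mul_le_mul_right (iInf_le _ τ) _).trans
    (ofReal_mul_stopCost_le_stopCost_const_mul μ ρ hh' hX hc τ.1)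

end Scaling

theorem stopping_set_upward_closed_general
    {Ω : Type*} [MeasurableSpace Ω] (μ : Measure Ω)
    (W : ℝ → Ω → ℝ)
    (β₂ σ : ℝ)
    (h h' : ℝ → ℝ)
    (hconv : ConvexOn ℝ Set.univ h)
    (hderiv : ∀ u : ℝ, HasDerivAt h (h' u) u)
    (ρ : ℝ) :
    ∀ x₁ x₂ : ℝ, 0 < x₁ → x₁ ≤ x₂ →
      ENNReal.ofReal x₁ ≤ stopValue μ ρ h' W (gbm W β₂ σ x₁) →
      ENNReal.ofReal x₂ ≤ stopValue μ ρ h' W (gbm W β₂ σ x₂) := by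
  intro x₁ x₂ hx₁ hle hv
  set c := x₂ / x₁
  have hc : 1 ≤ c := (one_le_div hx₁).mpr hle
  have hx₂ : x₂ = c * x₁ := (div_mul_cancel₀ _ hx₁.ne').symm
  have hgbm : gbm W β₂ σ x₂ = fun t ω => c * gbm W β₂ σ x₁ t ω := by
    ext t ω
    rw [hx₂, gbm_mul_left]
  have hX : ∀ t ω, 0 ≤ gbm W β₂ σ x₁ t ω := fun t ω => (mul_pos hx₁ (Real.exp_pos _)).le
  calc ENNReal.ofReal x₂ = ENNReal.ofReal c * ENNReal.ofReal x₁ := by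
        rw [← ENNReal.ofReal_mul (zero_le_one.trans hc), ← hx₂]
    _ ≤ ENNReal.ofReal c * stopValue μ ρ h' W (gbm W β₂ σ x₁) := by gcongr
    _ ≤ stopValue μ ρ h' W (gbm W β₂ σ x₂) := by
        rw [hgbm]
        exact ofReal_mul_stopValue_le_stopValue_const_mul μ ρ
          (hconv.monotone_of_hasDerivAt hderiv) hX hc W

/-- The stopping set `{ x > 0 : v_⋆(x) ≥ x }` of the one-dimensional stopping problem is
upward closed: if `0 < x₁ ≤ x₂` and `v_⋆(x₁) ≥ x₁` then `v_⋆(x₂) ≥ x₂`. -/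
theorem stopping_set_upward_closed
    {Ω : Type*} [MeasurableSpace Ω] (μ : Measure Ω) [IsProbabilityMeasure μ]
    (W : ℝ → Ω → ℝ) (hW : IsStandardBM μ W)
    (β₂ σ : ℝ) (hσ : 0 < σ)
    (γ K₁ : ℝ) (hγ : 1 < γ) (hK₁ : 0 < K₁)
    (h h' : ℝ → ℝ)
    (hconv : ConvexOn ℝ Set.univ h)
    (hderiv : ∀ u : ℝ, HasDerivAt h (h' u) u)
    (hh'_cont : Continuous h')
    (hmono : MonotoneOn h (Set.Ici (0:ℝ)))
    (h0 : h 0 = 0)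
    (hh'_bound : ∀ u : ℝ, 0 ≤ u → |h' u| ≤ K₁ * (1 + u ^ (γ - 1)))
    (ρ : ℝ) (hρ : max (β₂ + σ ^ 2 / 2) (γ * β₂ + σ ^ 2 / 2 * γ * (γ - 1)) < ρ) :
    ∀ x₁ x₂ : ℝ, 0 < x₁ → x₁ ≤ x₂ →
      ENNReal.ofReal x₁ ≤ stopValue μ ρ h' W (gbm W β₂ σ x₁) →
      ENNReal.ofReal x₂ ≤ stopValue μ ρ h' W (gbm W β₂ σ x₂) :=
  stopping_set_upward_closed_general μ W β₂ σ h h' hconv hderiv ρ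
end
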